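/- Given a solution R of the Yang–Baxter equation on V ⊗ V, the assignment σ_i ↦ R_{i,i+1} := id^{⊗(i−1)} ⊗ R ⊗ id^{⊗(m−i−1)} extends to an algebra homomorphism from the Hecke algebra H_m to End(V^{⊗m}), provided R also satisfies the Hecke quadratic relation (q·id − R)(q^{−1}·id + R) = 0. -/
import Mathlib


/-- The defining relations of the Hecke algebra `H` with generators `σ₀, …, σ_{N-1}`:
braid relations for adjacent generators, commutation of distant generators, and the
Hecke quadratic relation `(σᵢ − q·1)(σᵢ + q⁻¹·1) = 0`. -/
inductive HeckeRel (K : Type*) [Field K] (q : K) (N : ℕ) :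
    FreeAlgebra K (Fin N) → FreeAlgebra K (Fin N) → Prop
  | braid (i j : Fin N) (h : (i : ℕ) + 1 = j) :
      HeckeRel K q N (FreeAlgebra.ι K i * FreeAlgebra.ι K j * FreeAlgebra.ι K i)
        (FreeAlgebra.ι K j * FreeAlgebra.ι K i * FreeAlgebra.ι K j)
  | comm (i j : Fin N) (h : (i : ℕ) + 2 ≤ j) :
      HeckeRel K q N (FreeAlgebra.ι K i * FreeAlgebra.ι K j)
        (FreeAlgebra.ι K j * FreeAlgebra.ι K i)
  | quad (i : Fin N) :
      HeckeRel K q N ((FreeAlgebra.ι K i - q • 1) * (FreeAlgebra.ι K i + q⁻¹ • 1)) 0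

/-- The Hecke algebra `H_m` (with `m − 1` generators, so `N = m − 1`). -/
abbrev HeckeAlgebra (K : Type*) [Field K] (q : K) (N : ℕ) := RingQuot (HeckeRel K q N)

/-- The generator `σᵢ` of the Hecke algebra. -/
noncomputable def heckeσ (K : Type*) [Field K] (q : K) (N : ℕ) (i : Fin N) :
    HeckeAlgebra K q N :=
  RingQuot.mkAlgHom K (HeckeRel K q N) (FreeAlgebra.ι K i)

/-- The operator `R_{i,i+1} = id^{⊗(i−1)} ⊗ R ⊗ id^{⊗(m−i−1)}` acting on `(K^d)^{⊗m}`
(realized as a matrix indexed by `Fin m → Fin d`); `i` is 1-based, acting on the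
tensor factors `i` and `i+1`.  For `i` out of range it is the identity. -/
def opR {K : Type*} [Field K] {d : ℕ} (R : Matrix (Fin d × Fin d) (Fin d × Fin d) K)
    (m i : ℕ) : Matrix (Fin m → Fin d) (Fin m → Fin d) K :=
  Matrix.of fun x y =>
    if h : 1 ≤ i ∧ i + 1 ≤ m then
      R (x ⟨i - 1, by omega⟩, x ⟨i, by omega⟩) (y ⟨i - 1, by omega⟩, y ⟨i, by omega⟩) *
        ∏ j : Fin m,
          if (j : ℕ) = i - 1 ∨ (j : ℕ) = i then 1 else (if x j = y j then 1 else 0)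
    else (1 : Matrix (Fin m → Fin d) (Fin m → Fin d) K) x y

/-- The matrix `C₁C₂⋯C_m = C^{⊗m}` acting on `(K^d)^{⊗m}`. -/
def Cpow {K : Type*} [Field K] {d : ℕ} (C : Matrix (Fin d) (Fin d) K) (m : ℕ) :
    Matrix (Fin m → Fin d) (Fin m → Fin d) K :=
  Matrix.of fun x y => ∏ j : Fin m, C (x j) (y j)



section Aux
variable {K : Type*} [Field K] {d : ℕ}

lemma prodDelta {m : ℕ} (P : Fin m → Prop) [DecidablePred P] (x y : Fin m → Fin d) :
    (∏ j : Fin m, if P j then (1:K) else if x j = y j then 1 else 0)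
      = if ∀ j, ¬ P j → x j = y j then 1 else 0 := by
  by_cases h : ∀ j, ¬ P j → x j = y j
  · rw [if_pos h]
    apply Finset.prod_eq_one
    intro j _
    by_cases hp : P j
    · rw [if_pos hp]
    · rw [if_neg hp, if_pos (h j hp)]
  · rw [if_neg h]
    push_neg at h
    obtain ⟨j, hj1, hj2⟩ := h
    apply Finset.prod_eq_zero (Finset.mem_univ j)
    rw [if_neg hj1, if_neg hj2]

lemma iteMulIte {P Q : Prop} [Decidable P] [Decidable Q] :
    (if P then (1:K) else 0) * (if Q then 1 else 0) = if P ∧ Q then 1 else 0 := by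
  by_cases hP : P <;> by_cases hQ : Q <;> simp [hP, hQ]

/-- override `x` on the window `[a, a+w)` by `u`. -/
def wmerge (a w : ℕ) {m : ℕ} (x : Fin m → Fin d) (u : Fin w → Fin d) : Fin m → Fin d :=
  fun j => if h : a ≤ (j:ℕ) ∧ (j:ℕ) < a + w then u ⟨(j:ℕ) - a, by omega⟩ else x j

lemma wmerge_out {a w m : ℕ} (x : Fin m → Fin d) (u : Fin w → Fin d) (j : Fin m)
    (hj : ¬ (a ≤ (j:ℕ) ∧ (j:ℕ) < a + w)) : wmerge a w x u j = x j := dif_neg hj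

lemma wmerge_in {a w m : ℕ} (x : Fin m → Fin d) (u : Fin w → Fin d) (j : Fin m)
    (hj : a ≤ (j:ℕ) ∧ (j:ℕ) < a + w) :
    wmerge a w x u j = u ⟨(j:ℕ) - a, by omega⟩ := dif_pos hj

lemma wmerge_restrict {a w m : ℕ} (h : a + w ≤ m) (x : Fin m → Fin d) (u : Fin w → Fin d) :
    (fun j : Fin w => wmerge a w x u ⟨a + (j:ℕ), by omega⟩) = u := by
  funext j
  rw [wmerge_in x u _ (by constructor <;> simp)]
  congr 1
  ext
  simp

lemma sum_merge {m : ℕ} (a w : ℕ) (h : a + w ≤ m) (x : Fin m → Fin d)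
    (F : (Fin m → Fin d) → K) :
    ∑ z : Fin m → Fin d,
        F z * (if ∀ j : Fin m, ¬(a ≤ (j:ℕ) ∧ (j:ℕ) < a + w) → x j = z j then 1 else 0)
      = ∑ u : Fin w → Fin d, F (wmerge a w x u) := by
  have step : ∀ z : Fin m → Fin d,
      F z * (if ∀ j : Fin m, ¬(a ≤ (j:ℕ) ∧ (j:ℕ) < a + w) → x j = z j then 1 else 0)
        = if ∀ j : Fin m, ¬(a ≤ (j:ℕ) ∧ (j:ℕ) < a + w) → x j = z j then F z else 0 := by
    intro z; split <;> simp
  simp_rw [step]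
  rw [← Finset.sum_filter]
  apply Finset.sum_nbij' (fun z => fun j : Fin w => z ⟨a + (j:ℕ), by omega⟩)
    (fun u => wmerge a w x u)
  · intro z hz; exact Finset.mem_univ _
  · intro u hu
    simp only [Finset.mem_filter, Finset.mem_univ, true_and]
    intro j hj
    rw [wmerge_out x u j hj]
  · intro z hz
    simp only [Finset.mem_filter, Finset.mem_univ, true_and] at hz
    funext j
    by_cases hj : a ≤ (j:ℕ) ∧ (j:ℕ) < a + w
    · rw [wmerge_in _ _ _ hj]
      congr 1
      ext
      simp
      omega
    · rw [wmerge_out _ _ _ hj]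
      exact hz j hj
  · intro u hu
    exact wmerge_restrict h x u
  · intro z hz
    simp only [Finset.mem_filter, Finset.mem_univ, true_and] at hz
    congr 1
    funext j
    by_cases hj : a ≤ (j:ℕ) ∧ (j:ℕ) < a + w
    · rw [wmerge_in _ _ _ hj]
      congr 1
      ext
      simp
      omega
    · rw [wmerge_out _ _ _ hj]
      exact (hz j hj).symm

/-- The embedding of a `w`-local operator into the window `[a, a+w)` of `m` sites. -/
def emb (a w : ℕ) {m : ℕ} (h : a + w ≤ m)
    (M : Matrix (Fin w → Fin d) (Fin w → Fin d) K) :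
    Matrix (Fin m → Fin d) (Fin m → Fin d) K :=
  Matrix.of fun x y =>
    M (fun j => x ⟨a + (j:ℕ), by omega⟩) (fun j => y ⟨a + (j:ℕ), by omega⟩) *
      ∏ j : Fin m, if a ≤ (j:ℕ) ∧ (j:ℕ) < a + w then (1:K) else if x j = y j then 1 else 0

lemma emb_mul {a w m : ℕ} (h : a + w ≤ m)
    (M N : Matrix (Fin w → Fin d) (Fin w → Fin d) K) :
    emb a w h M * emb a w h N = emb a w h (M * N) := by
  ext x y
  rw [Matrix.mul_apply]
  simp only [emb, Matrix.of_apply]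
  simp_rw [prodDelta]
  have rearr : ∀ z : Fin m → Fin d,
      (M (fun j => x ⟨a + (j:ℕ), by omega⟩) (fun j => z ⟨a + (j:ℕ), by omega⟩) *
        (if ∀ j : Fin m, ¬(a ≤ (j:ℕ) ∧ (j:ℕ) < a + w) → x j = z j then (1:K) else 0)) *
      (N (fun j => z ⟨a + (j:ℕ), by omega⟩) (fun j => y ⟨a + (j:ℕ), by omega⟩) *
        (if ∀ j : Fin m, ¬(a ≤ (j:ℕ) ∧ (j:ℕ) < a + w) → z j = y j then (1:K) else 0))
      = (M (fun j => x ⟨a + (j:ℕ), by omega⟩) (fun j => z ⟨a + (j:ℕ), by omega⟩) *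
        (N (fun j => z ⟨a + (j:ℕ), by omega⟩) (fun j => y ⟨a + (j:ℕ), by omega⟩) *
          (if ∀ j : Fin m, ¬(a ≤ (j:ℕ) ∧ (j:ℕ) < a + w) → z j = y j then (1:K) else 0))) *
        (if ∀ j : Fin m, ¬(a ≤ (j:ℕ) ∧ (j:ℕ) < a + w) → x j = z j then (1:K) else 0) := by
    intro z; ring
  rw [Finset.sum_congr rfl fun z _ => rearr z]
  rw [sum_merge a w h x]
  have hres : ∀ u : Fin w → Fin d,
      (fun j : Fin w => wmerge a w x u ⟨a + (j:ℕ), by omega⟩) = u :=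
    fun u => wmerge_restrict h x u
  have hcond : ∀ u : Fin w → Fin d,
      (∀ j : Fin m, ¬(a ≤ (j:ℕ) ∧ (j:ℕ) < a + w) → wmerge a w x u j = y j)
        ↔ (∀ j : Fin m, ¬(a ≤ (j:ℕ) ∧ (j:ℕ) < a + w) → x j = y j) :=
    fun u => forall_congr' fun j => imp_congr_right fun hj => by rw [wmerge_out x u j hj]
  simp_rw [hres, hcond]
  rw [Matrix.mul_apply, Finset.sum_mul]
  apply Finset.sum_congr rfl
  intro u _
  ring

lemma emb_one {a w m : ℕ} (h : a + w ≤ m) :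
    emb a w h (1 : Matrix (Fin w → Fin d) (Fin w → Fin d) K) = 1 := by
  ext x y
  simp only [emb, Matrix.of_apply, Matrix.one_apply]
  rw [prodDelta, iteMulIte]
  refine if_congr ?_ rfl rfl
  constructor
  · rintro ⟨h1, h2⟩
    funext j
    by_cases hj : a ≤ (j:ℕ) ∧ (j:ℕ) < a + w
    · have := congrFun h1 (⟨(j:ℕ) - a, by omega⟩ : Fin w)
      simp only at this
      have e : (⟨a + ((j:ℕ) - a), by omega⟩ : Fin m) = j := by ext; simp; omega
      rwa [e] at this
    · exact h2 j hj
  · intro hxy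
    subst hxy
    exact ⟨rfl, fun j _ => rfl⟩

lemma emb_add {a w m : ℕ} (h : a + w ≤ m)
    (M N : Matrix (Fin w → Fin d) (Fin w → Fin d) K) :
    emb a w h (M + N) = emb a w h M + emb a w h N := by
  ext x y
  simp only [emb, Matrix.of_apply, Matrix.add_apply]
  ring

lemma emb_sub {a w m : ℕ} (h : a + w ≤ m)
    (M N : Matrix (Fin w → Fin d) (Fin w → Fin d) K) :
    emb a w h (M - N) = emb a w h M - emb a w h N := by
  ext x y
  simp only [emb, Matrix.of_apply, Matrix.sub_apply]
  ring

lemma emb_smul {a w m : ℕ} (h : a + w ≤ m) (c : K)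
    (M : Matrix (Fin w → Fin d) (Fin w → Fin d) K) :
    emb a w h (c • M) = c • emb a w h M := by
  ext x y
  simp only [emb, Matrix.of_apply, Matrix.smul_apply, smul_eq_mul]
  ring

lemma emb_zero {a w m : ℕ} (h : a + w ≤ m) :
    emb a w h (0 : Matrix (Fin w → Fin d) (Fin w → Fin d) K) = 0 := by
  ext x y
  simp [emb]

lemma opR_emb {m : ℕ} (R : Matrix (Fin d × Fin d) (Fin d × Fin d) K)
    (a w t : ℕ) (ht1 : 1 ≤ t) (ht2 : t + 1 ≤ w) (h : a + w ≤ m) :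
    opR R m (a + t) = emb a w h (opR R w t) := by
  ext x y
  simp only [opR, emb, Matrix.of_apply]
  rw [dif_pos (show 1 ≤ a + t ∧ a + t + 1 ≤ m by omega),
      dif_pos (show 1 ≤ t ∧ t + 1 ≤ w from ⟨ht1, ht2⟩)]
  simp_rw [prodDelta]
  rw [mul_assoc, iteMulIte]
  congr 1
  · congr 1
    · congr 1 <;> · congr 1; simp [Fin.ext_iff]; omega
    · congr 1 <;> · congr 1; simp [Fin.ext_iff]; omega
  · refine if_congr ?_ rfl rfl
    constructor
    · intro h1
      constructor
      · intro j hj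
        refine h1 ⟨a + (j:ℕ), by omega⟩ ?_
        show ¬(a + (j:ℕ) = a + t - 1 ∨ a + (j:ℕ) = a + t)
        simp only [not_or] at hj ⊢
        omega
      · intro j hj
        refine h1 j ?_
        show ¬((j:ℕ) = a + t - 1 ∨ (j:ℕ) = a + t)
        omega
    · rintro ⟨h2, h3⟩ j hj
      by_cases hw : a ≤ (j:ℕ) ∧ (j:ℕ) < a + w
      · have hcond : ¬(((⟨(j:ℕ) - a, by omega⟩ : Fin w) : ℕ) = t - 1
            ∨ ((⟨(j:ℕ) - a, by omega⟩ : Fin w) : ℕ) = t) := by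
          show ¬((j:ℕ) - a = t - 1 ∨ (j:ℕ) - a = t)
          simp only [not_or] at hj ⊢
          omega
        have := h2 ⟨(j:ℕ) - a, by omega⟩ hcond
        simp only at this
        have e : (⟨a + ((j:ℕ) - a), by omega⟩ : Fin m) = j := by
          simp [Fin.ext_iff]; omega
        rwa [e] at this
      · exact h3 j hw

lemma opR_mul_disjoint {m : ℕ} (A B : Matrix (Fin d × Fin d) (Fin d × Fin d) K)
    (p r : ℕ) (hp1 : 1 ≤ p) (hpm : p + 1 ≤ m) (hr1 : 1 ≤ r) (hrm : r + 1 ≤ m)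
    (hdisj : p + 2 ≤ r ∨ r + 2 ≤ p) :
    opR A m p * opR B m r = Matrix.of fun x y =>
      A (x ⟨p-1, by omega⟩, x ⟨p, by omega⟩) (y ⟨p-1, by omega⟩, y ⟨p, by omega⟩) *
      B (x ⟨r-1, by omega⟩, x ⟨r, by omega⟩) (y ⟨r-1, by omega⟩, y ⟨r, by omega⟩) *
      (if ∀ k : Fin m, ¬((k:ℕ) = p-1 ∨ (k:ℕ) = p ∨ (k:ℕ) = r-1 ∨ (k:ℕ) = r) → x k = y k
        then 1 else 0) := by
  ext x y
  rw [Matrix.mul_apply]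
  simp only [opR, Matrix.of_apply]
  simp_rw [dif_pos (show 1 ≤ p ∧ p + 1 ≤ m from ⟨hp1, hpm⟩),
    dif_pos (show 1 ≤ r ∧ r + 1 ≤ m from ⟨hr1, hrm⟩), prodDelta]
  have cond1 : ∀ z : Fin m → Fin d,
      (if ∀ k : Fin m, ¬((k:ℕ) = p - 1 ∨ (k:ℕ) = p) → x k = z k then (1:K) else 0)
        = (if ∀ k : Fin m, ¬(p - 1 ≤ (k:ℕ) ∧ (k:ℕ) < p - 1 + 2) → x k = z k
            then (1:K) else 0) := by
    intro z
    refine if_congr (forall_congr' fun k => imp_congr_left ?_) rfl rfl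
    constructor <;> · intro hk; omega
  simp_rw [cond1]
  have rearr : ∀ z : Fin m → Fin d,
      (A (x ⟨p-1, by omega⟩, x ⟨p, by omega⟩) (z ⟨p-1, by omega⟩, z ⟨p, by omega⟩) *
        (if ∀ k : Fin m, ¬(p - 1 ≤ (k:ℕ) ∧ (k:ℕ) < p - 1 + 2) → x k = z k
          then (1:K) else 0)) *
      (B (z ⟨r-1, by omega⟩, z ⟨r, by omega⟩) (y ⟨r-1, by omega⟩, y ⟨r, by omega⟩) *
        (if ∀ k : Fin m, ¬((k:ℕ) = r - 1 ∨ (k:ℕ) = r) → z k = y k then (1:K) else 0))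
      = (A (x ⟨p-1, by omega⟩, x ⟨p, by omega⟩) (z ⟨p-1, by omega⟩, z ⟨p, by omega⟩) *
        (B (z ⟨r-1, by omega⟩, z ⟨r, by omega⟩) (y ⟨r-1, by omega⟩, y ⟨r, by omega⟩) *
          (if ∀ k : Fin m, ¬((k:ℕ) = r - 1 ∨ (k:ℕ) = r) → z k = y k then (1:K) else 0))) *
        (if ∀ k : Fin m, ¬(p - 1 ≤ (k:ℕ) ∧ (k:ℕ) < p - 1 + 2) → x k = z k
          then (1:K) else 0) := by
    intro z; ring
  rw [Finset.sum_congr rfl fun z _ => rearr z]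
  rw [sum_merge (p-1) 2 (by omega) x]
  have w1 : ∀ u : Fin 2 → Fin d, wmerge (p-1) 2 x u ⟨p-1, by omega⟩ = u 0 := by
    intro u
    rw [wmerge_in x u _ (by simp)]
    congr 1
    simp [Fin.ext_iff]
  have w2 : ∀ u : Fin 2 → Fin d, wmerge (p-1) 2 x u ⟨p, by omega⟩ = u 1 := by
    intro u
    rw [wmerge_in x u _ (by simp; omega)]
    congr 1
    simp [Fin.ext_iff]
    omega
  have w3 : ∀ u : Fin 2 → Fin d, wmerge (p-1) 2 x u ⟨r-1, by omega⟩ = x ⟨r-1, by omega⟩ := by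
    intro u
    exact wmerge_out x u _ (by simp; omega)
  have w4 : ∀ u : Fin 2 → Fin d, wmerge (p-1) 2 x u ⟨r, by omega⟩ = x ⟨r, by omega⟩ := by
    intro u
    exact wmerge_out x u _ (by simp; omega)
  have hc : ∀ u : Fin 2 → Fin d,
      (∀ k : Fin m, ¬((k:ℕ) = r - 1 ∨ (k:ℕ) = r) → wmerge (p-1) 2 x u k = y k)
        ↔ ((u 0 = y ⟨p-1, by omega⟩ ∧ u 1 = y ⟨p, by omega⟩) ∧
            ∀ k : Fin m, ¬((k:ℕ) = p-1 ∨ (k:ℕ) = p ∨ (k:ℕ) = r-1 ∨ (k:ℕ) = r) → x k = y k) := by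
    intro u
    constructor
    · intro hcd
      refine ⟨⟨?_, ?_⟩, ?_⟩
      · rw [← w1 u]
        exact hcd ⟨p-1, by omega⟩ (by show ¬(p - 1 = r - 1 ∨ p - 1 = r); omega)
      · rw [← w2 u]
        exact hcd ⟨p, by omega⟩ (by show ¬(p = r - 1 ∨ p = r); omega)
      · intro k hk
        simp only [not_or] at hk
        have := hcd k (by omega)
        rwa [wmerge_out x u k (by omega)] at this
    · rintro ⟨⟨h0, h1⟩, hrest⟩ k hk
      simp only [not_or] at hk
      by_cases hw : p - 1 ≤ (k:ℕ) ∧ (k:ℕ) < p - 1 + 2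
      · have : (k:ℕ) = p - 1 ∨ (k:ℕ) = p := by omega
        rcases this with e | e
        · have ek : k = (⟨p-1, by omega⟩ : Fin m) := by simp [Fin.ext_iff]; omega
          rw [ek, w1 u]
          exact h0
        · have ek : k = (⟨p, by omega⟩ : Fin m) := by simp [Fin.ext_iff]; omega
          rw [ek, w2 u]
          exact h1
      · rw [wmerge_out x u k hw]
        exact hrest k (by omega)
  simp_rw [w1, w2, w3, w4, hc]
  rw [Fintype.sum_eq_single (![y ⟨p-1, by omega⟩, y ⟨p, by omega⟩] : Fin 2 → Fin d) ?_]
  · simp only [Matrix.cons_val_zero, Matrix.cons_val_one, Matrix.head_cons, and_self, true_and]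
    ring
  · intro u hu
    rw [if_neg, mul_zero, mul_zero]
    rintro ⟨⟨e0, e1⟩, -⟩
    apply hu
    funext k
    fin_cases k
    · simpa using e0
    · simpa using e1

lemma opR_two_eq (R : Matrix (Fin d × Fin d) (Fin d × Fin d) K) :
    opR R 2 1 = (Matrix.reindexAlgEquiv K K (piFinTwoEquiv (fun _ => Fin d)).symm) R := by
  ext u v
  simp only [opR, Matrix.of_apply, Matrix.reindexAlgEquiv_apply, Matrix.reindex_apply,
    Matrix.submatrix_apply, Equiv.symm_symm, piFinTwoEquiv_apply]
  rw [dif_pos (by omega)]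
  rw [Fin.prod_univ_two]
  norm_num

lemma hecke2 (q : K) (R : Matrix (Fin d × Fin d) (Fin d × Fin d) K)
    (hHecke : (q • (1 : Matrix (Fin d × Fin d) (Fin d × Fin d) K) - R) * (q⁻¹ • 1 + R) = 0) :
    (q • (1 : Matrix (Fin 2 → Fin d) (Fin 2 → Fin d) K) - opR R 2 1) *
      (q⁻¹ • 1 + opR R 2 1) = 0 := by
  rw [opR_two_eq]
  have h2 := congrArg (Matrix.reindexAlgEquiv K K (piFinTwoEquiv (fun _ => Fin d)).symm) hHecke
  simpa [map_mul, map_sub, map_add, map_smul, map_one] using h2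

lemma opR_quad {m : ℕ} (q : K) (R : Matrix (Fin d × Fin d) (Fin d × Fin d) K)
    (hHecke : (q • (1 : Matrix (Fin d × Fin d) (Fin d × Fin d) K) - R) * (q⁻¹ • 1 + R) = 0)
    (i : ℕ) (h2 : i + 2 ≤ m) :
    (opR R m (i+1) - q • 1) * (opR R m (i+1) + q⁻¹ • 1) = 0 := by
  have h : i + 2 ≤ m := h2
  have e1 : opR R m (i + 1) = emb i 2 h (opR R 2 1) :=
    opR_emb R i 2 1 (by norm_num) (by norm_num) h
  rw [e1, ← emb_one h (K := K) (d := d), ← emb_smul, ← emb_smul, ← emb_sub, ← emb_add,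
    emb_mul]
  have key : (opR R 2 1 - q • 1) * (opR R 2 1 + q⁻¹ • (1 : Matrix (Fin 2 → Fin d) (Fin 2 → Fin d) K)) = 0 := by
    have hh := hecke2 q R hHecke
    rw [show opR R 2 1 - q • 1 = -(q • (1 : Matrix (Fin 2 → Fin d) (Fin 2 → Fin d) K) - opR R 2 1) from (neg_sub _ _).symm,
      show opR R 2 1 + q⁻¹ • (1 : Matrix (Fin 2 → Fin d) (Fin 2 → Fin d) K) = q⁻¹ • 1 + opR R 2 1 from add_comm _ _,
      neg_mul, hh, neg_zero]
  rw [key, emb_zero]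

lemma opR_braid {m : ℕ} (R : Matrix (Fin d × Fin d) (Fin d × Fin d) K)
    (hYB : opR R 3 1 * opR R 3 2 * opR R 3 1 = opR R 3 2 * opR R 3 1 * opR R 3 2)
    (i : ℕ) (h1 : 1 ≤ i) (h2 : i + 2 ≤ m) :
    opR R m i * opR R m (i+1) * opR R m i = opR R m (i+1) * opR R m i * opR R m (i+1) := by
  have h : (i-1) + 3 ≤ m := by omega
  have e1 : opR R m i = emb (i-1) 3 h (opR R 3 1) := by
    have := opR_emb R (i-1) 3 1 (by norm_num) (by norm_num) h
    rwa [show i - 1 + 1 = i by omega] at this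
  have e2 : opR R m (i+1) = emb (i-1) 3 h (opR R 3 2) := by
    have := opR_emb R (i-1) 3 2 (by norm_num) (by norm_num) h
    rwa [show i - 1 + 2 = i + 1 by omega] at this
  rw [e1, e2, emb_mul, emb_mul, emb_mul, emb_mul, hYB]

lemma opR_comm {m : ℕ} (R : Matrix (Fin d × Fin d) (Fin d × Fin d) K)
    (i j : ℕ) (h1 : 1 ≤ i) (h2 : i + 2 ≤ j) (h3 : j + 1 ≤ m) :
    opR R m i * opR R m j = opR R m j * opR R m i := by
  rw [opR_mul_disjoint R R i j h1 (by omega) (by omega) h3 (Or.inl h2),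
      opR_mul_disjoint R R j i (by omega) h3 h1 (by omega) (Or.inr h2)]
  ext x y
  simp only [Matrix.of_apply]
  congr 1
  · rw [mul_comm]
  · refine if_congr (forall_congr' fun k => imp_congr_left ?_) rfl rfl
    constructor <;> · intro hk; omega

end Aux


/-- a Yang–Baxter solution `R` on `V ⊗ V` satisfying the Hecke quadratic
relation yields, via `σᵢ ↦ R_{i,i+1}`, an algebra homomorphism from the Hecke algebra
`H_m` (with `m − 1` generators) to `End(V^{⊗m})`. -/
theorem hecke_local_representation {K : Type*} [Field K] (q : K) (hq : q ≠ 0) {d : ℕ}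
    (R : Matrix (Fin d × Fin d) (Fin d × Fin d) K)
    (hYB : opR R 3 1 * opR R 3 2 * opR R 3 1 = opR R 3 2 * opR R 3 1 * opR R 3 2)
    (hHecke : (q • (1 : Matrix (Fin d × Fin d) (Fin d × Fin d) K) - R) * (q⁻¹ • 1 + R) = 0)
    (m : ℕ) :
    ∃ φ : HeckeAlgebra K q (m - 1) →ₐ[K] Matrix (Fin m → Fin d) (Fin m → Fin d) K,
      ∀ i : Fin (m - 1), φ (heckeσ K q (m - 1) i) = opR R m ((i : ℕ) + 1) := by
  classical
  have hrel : ∀ ⦃a b : FreeAlgebra K (Fin (m-1))⦄, HeckeRel K q (m-1) a b →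
      (FreeAlgebra.lift K (fun i : Fin (m-1) => opR R m ((i:ℕ)+1))) a =
      (FreeAlgebra.lift K (fun i : Fin (m-1) => opR R m ((i:ℕ)+1))) b := by
    intro a b hab
    induction hab with
    | braid i j hij =>
        have hi := i.2
        have hj := j.2
        simp only [map_mul, FreeAlgebra.lift_ι_apply]
        rw [show ((j:ℕ)+1) = (↑i+1)+1 by omega]
        have h1 : 1 ≤ (i:ℕ)+1 := by omega
        have h2 : (i:ℕ)+1+2 ≤ m := by omega
        exact opR_braid (m := m) R hYB ((i:ℕ)+1) h1 h2
    | comm i j hij =>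
        have hi := i.2
        have hj := j.2
        simp only [map_mul, FreeAlgebra.lift_ι_apply]
        have h1 : 1 ≤ (i:ℕ)+1 := by omega
        have h2 : (i:ℕ)+1+2 ≤ (j:ℕ)+1 := by omega
        have h3 : (j:ℕ)+1+1 ≤ m := by omega
        exact opR_comm (m := m) R ((i:ℕ)+1) ((j:ℕ)+1) h1 h2 h3
    | quad i =>
        have hi := i.2
        simp only [map_mul, map_sub, map_add, map_smul, map_one, map_zero,
          FreeAlgebra.lift_ι_apply]
        have h2 : (i:ℕ)+2 ≤ m := by omega
        exact opR_quad (m := m) q R hHecke (i:ℕ) h2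
  refine ⟨RingQuot.liftAlgHom K ⟨FreeAlgebra.lift K (fun i : Fin (m-1) => opR R m ((i:ℕ)+1)), hrel⟩, ?_⟩
  intro i
  simp [heckeσ, RingQuot.liftAlgHom_mkAlgHom_apply, FreeAlgebra.lift_ι_apply]
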